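/- Let n ≥ 2r and let A = {a_1<⋯<a_r}, B = {b_1<⋯<b_r} ∈ Binom([n],r). Then A and B are cross intersecting if and only if there exists a pair i, j with 1 ≤ i, j ≤ r such that i + j > max{a_i, b_j}. -/

import Mathlib

open Finset

/-- The `i`-th smallest element of a finite set of naturals (1-indexed);
    `0` if out of range. -/
def nthEl (A : Finset ℕ) (i : ℕ) : ℕ := (A.sort (· ≤ ·)).getD (i - 1) 0

/-- `A ≺ C` : `C = {c_1 < ⋯ < c_k}` with `k ≤ |A|` and `a_i ≤ c_i` for `1 ≤ i ≤ k`. -/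
def SetPrec (A C : Finset ℕ) : Prop :=
  C.card ≤ A.card ∧ ∀ i ∈ Finset.Icc 1 C.card, nthEl A i ≤ nthEl C i

instance (A C : Finset ℕ) : Decidable (SetPrec A C) := by
  unfold SetPrec; infer_instance

/-- The compression order: `A ≤ B` for sets of the same size, `a_i ≤ b_i` for all `i`. -/
def SetLE (A B : Finset ℕ) : Prop :=
  A.card = B.card ∧ ∀ i ∈ Finset.Icc 1 A.card, nthEl A i ≤ nthEl B i

instance (A B : Finset ℕ) : Decidable (SetLE A B) := by
  unfold SetLE; infer_instance

/-- `Binom([n], r)`: the family of `r`-element subsets of `[n] = {1, …, n}`. -/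
def binomF (n r : ℕ) : Finset (Finset ℕ) := (Finset.Icc 1 n).powersetCard r

/-- `𝒜(X) = {A ∈ 𝒜 : A ∩ X ≠ ∅}`. -/
def famX (𝒜 : Finset (Finset ℕ)) (X : Finset ℕ) : Finset (Finset ℕ) :=
  𝒜.filter fun A => (A ∩ X).Nonempty

/-- The star `𝒮_{n,r} = {A ∈ Binom([n],r) : 1 ∈ A}`. -/
def starF (n r : ℕ) : Finset (Finset ℕ) := (binomF n r).filter fun A => 1 ∈ A

/-- A family is intersecting if any two members meet. -/
def IntersectingF (𝒜 : Finset (Finset ℕ)) : Prop :=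
  ∀ A ∈ 𝒜, ∀ B ∈ 𝒜, (A ∩ B).Nonempty

/-- A family `𝒜 ⊆ Binom([n],r)` is compressed if `A ∈ 𝒜`, `B ∈ Binom([n],r)`, `B ≤ A`
    imply `B ∈ 𝒜`. -/
def CompressedF (n r : ℕ) (𝒜 : Finset (Finset ℕ)) : Prop :=
  ∀ A ∈ 𝒜, ∀ B ∈ binomF n r, SetLE B A → B ∈ 𝒜

/-- `F(r, n, 𝒢) = {A ∈ Binom([n],r) : A ≺ G for some G ∈ 𝒢}`. -/
def genF (r n : ℕ) (𝒢 : Finset (Finset ℕ)) : Finset (Finset ℕ) :=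
  (binomF n r).filter fun A => ∃ G ∈ 𝒢, SetPrec A G

/-- `𝒜_{n,r,s} = F(r, n, {[s, 2s-1]})`. -/
def Anrs (n r s : ℕ) : Finset (Finset ℕ) := genF r n {Finset.Icc s (2 * s - 1)}

/-- `X ⊆ [2,n]` is EKR for parameters `(n, r)` if `|𝒜(X)| ≤ |𝒮_{n,r}(X)|` for every
    compressed intersecting family `𝒜 ⊆ Binom([n],r)`. -/
def IsEKR (n r : ℕ) (X : Finset ℕ) : Prop :=
  X ⊆ Finset.Icc 2 n ∧
  ∀ 𝒜 ⊆ binomF n r, CompressedF n r 𝒜 → IntersectingF 𝒜 →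
    (famX 𝒜 X).card ≤ (famX (starF n r) X).card

/-- `X` is eventually EKR for `r` if it is EKR for `(n, r)` for all sufficiently large `n`. -/
def EventuallyEKR (r : ℕ) (X : Finset ℕ) : Prop :=
  ∃ N : ℕ, ∀ n ≥ N, IsEKR n r X

/-- `A` and `B` (r-element subsets of `[n]`) are cross intersecting if `C ∩ D ≠ ∅`
    for every `C ≤ A` and `D ≤ B`. -/
def CrossInt (n r : ℕ) (A B : Finset ℕ) : Prop :=
  ∀ C ∈ binomF n r, ∀ D ∈ binomF n r, SetLE C A → SetLE D B → (C ∩ D).Nonempty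

lemma nthEl_eq (S : Finset ℕ) {i : ℕ} (h1 : 1 ≤ i) (h2 : i ≤ S.card) :
    nthEl S i = (S.sort (· ≤ ·))[i-1]'(by rw [Finset.length_sort]; omega) := by
  unfold nthEl
  rw [List.getD_eq_getElem _ _ (by rw [Finset.length_sort]; omega)]

lemma nthEl_mem (S : Finset ℕ) {i : ℕ} (h1 : 1 ≤ i) (h2 : i ≤ S.card) : nthEl S i ∈ S := by
  rw [nthEl_eq S h1 h2]
  exact (Finset.mem_sort (· ≤ ·)).mp (List.getElem_mem _)

lemma nthEl_lt (S : Finset ℕ) {i j : ℕ} (h1 : 1 ≤ i) (hij : i < j) (h2 : j ≤ S.card) :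
    nthEl S i < nthEl S j := by
  rw [nthEl_eq S h1 (by omega), nthEl_eq S (by omega) h2]
  exact List.pairwise_iff_getElem.mp (Finset.sortedLT_sort S).pairwise _ _ _ _ (by omega)

lemma sort_image (r : ℕ) (φ : ℕ → ℕ) (hφ : StrictMonoOn φ (Finset.Icc 1 r)) :
    ((Finset.Icc 1 r).image φ).sort (· ≤ ·) = (List.range' 1 r).map φ := by
  have hmem : ∀ x ∈ List.range' 1 r, x ∈ Finset.Icc 1 r := by
    intro x hx
    rw [List.mem_range'_1] at hx
    simp only [Finset.mem_Icc]
    omega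
  refine (fun hp h1 h2 => List.Perm.eq_of_pairwise' (r := (· ≤ ·)) h1 h2 hp) ?_ ?_ ?_
  · apply List.perm_of_nodup_nodup_toFinset_eq
    · exact Finset.sort_nodup _ _
    · exact (List.nodup_range' 1).map_on
        (fun x hx y hy h => hφ.injOn (hmem x hx) (hmem y hy) h)
    · rw [Finset.sort_toFinset]
      ext x
      simp only [List.mem_toFinset, List.mem_map, List.mem_range'_1, Finset.mem_image,
        Finset.mem_Icc]
      constructor
      · rintro ⟨a, ha, rfl⟩; exact ⟨a, by omega, rfl⟩
      · rintro ⟨a, ha, rfl⟩; exact ⟨a, by omega, rfl⟩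
  · exact Finset.pairwise_sort _ _
  · rw [List.pairwise_iff_getElem]
    intro a b ha hb hab
    rw [List.length_map, List.length_range'] at ha hb
    rw [List.getElem_map, List.getElem_map, List.getElem_range'_1, List.getElem_range'_1]
    exact le_of_lt (hφ (by simp only [Finset.coe_Icc, Set.mem_Icc]; omega)
      (by simp only [Finset.coe_Icc, Set.mem_Icc]; omega) (by omega))

lemma nthEl_image (r : ℕ) (φ : ℕ → ℕ) (hφ : StrictMonoOn φ (Finset.Icc 1 r))
    {i : ℕ} (h1 : 1 ≤ i) (h2 : i ≤ r) :
    nthEl ((Finset.Icc 1 r).image φ) i = φ i := by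
  unfold nthEl
  rw [sort_image r φ hφ,
    List.getD_eq_getElem _ _ (by simp only [List.length_map, List.length_range']; omega)]
  rw [List.getElem_map, List.getElem_range'_1]
  congr 1
  omega

lemma card_image_smo (r : ℕ) (φ : ℕ → ℕ) (hφ : StrictMonoOn φ (Finset.Icc 1 r)) :
    ((Finset.Icc 1 r).image φ).card = r := by
  rw [Finset.card_image_of_injOn hφ.injOn, Nat.card_Icc]
  omega

lemma nthEl_le (S : Finset ℕ) {i j : ℕ} (h1 : 1 ≤ i) (hij : i ≤ j) (h2 : j ≤ S.card) :
    nthEl S i ≤ nthEl S j := by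
  rcases eq_or_lt_of_le hij with rfl | h
  · exact le_rfl
  · exact le_of_lt (nthEl_lt S h1 h h2)

lemma nthEl_add_le (S : Finset ℕ) (d : ℕ) : ∀ i, 1 ≤ i → i + d ≤ S.card →
    nthEl S i + d ≤ nthEl S (i + d) := by
  induction d with
  | zero => intro i _ _; simp
  | succ d ih =>
    intro i h1 h2
    have := ih i h1 (by omega)
    have h3 : nthEl S (i + d) < nthEl S (i + d + 1) :=
      nthEl_lt S (by omega) (by omega) (by omega)
    show nthEl S i + (d + 1) ≤ nthEl S (i + d + 1)
    omega

lemma le_nthEl (S : Finset ℕ) (n : ℕ) (hsub : S ⊆ Finset.Icc 1 n) {i : ℕ}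
    (h1 : 1 ≤ i) (h2 : i ≤ S.card) : i ≤ nthEl S i := by
  have hb : 1 ≤ nthEl S 1 := by
    have := hsub (nthEl_mem S le_rfl (by omega))
    rw [Finset.mem_Icc] at this
    exact this.1
  have := nthEl_add_le S (i - 1) 1 le_rfl (by omega)
  have he : 1 + (i - 1) = i := by omega
  rw [he] at this
  omega


/-- Lemma `l.intcond2`: `A, B ∈ Binom([n],r)` (with `n ≥ 2r`) are cross
intersecting iff there are `1 ≤ i, j ≤ r` with `i + j > max{a_i, b_j}`. -/
theorem cross_intersecting_iff (n r : ℕ) (hn : 2 * r ≤ n)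
    (A B : Finset ℕ) (hA : A ∈ binomF n r) (hB : B ∈ binomF n r) :
    CrossInt n r A B ↔
      ∃ i j : ℕ, 1 ≤ i ∧ i ≤ r ∧ 1 ≤ j ∧ j ≤ r ∧
        max (nthEl A i) (nthEl B j) < i + j := by
  rw [binomF, Finset.mem_powersetCard] at hA hB
  obtain ⟨hAsub, hAcard⟩ := hA
  obtain ⟨hBsub, hBcard⟩ := hB
  constructor
  · -- CrossInt → ∃ i j
    intro hCI
    by_contra hne
    push_neg at hne
    -- hne : ∀ i j, 1 ≤ i → i ≤ r → 1 ≤ j → j ≤ r → i + j ≤ max (nthEl A i) (nthEl B j)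
    set f : ℕ → ℕ := fun i => min (nthEl A i - i) r with hfdef
    have hAle : ∀ i, 1 ≤ i → i ≤ r → i ≤ nthEl A i := fun i h1 h2 =>
      le_nthEl A n hAsub h1 (by omega)
    have hBle : ∀ j, 1 ≤ j → j ≤ r → j ≤ nthEl B j := fun j h1 h2 =>
      le_nthEl B n hBsub h1 (by omega)
    have hfmono : ∀ i i', 1 ≤ i → i ≤ i' → i' ≤ r → f i ≤ f i' := by
      intro i i' h1 h2 h3
      have hadd := nthEl_add_le A (i' - i) i h1 (by omega)
      have heq : i + (i' - i) = i' := by omega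
      rw [heq] at hadd
      have hi := hAle i h1 (by omega)
      simp only [hfdef]
      omega
    set δ : ℕ → ℕ := fun j => ((Finset.Icc 1 r).filter (fun i => f i < j)).card with hδdef
    have hδr : ∀ j, δ j ≤ r := by
      intro j
      simp only [hδdef]
      calc ((Finset.Icc 1 r).filter (fun i => f i < j)).card
          ≤ (Finset.Icc 1 r).card := Finset.card_le_card (Finset.filter_subset _ _)
        _ = r := by rw [Nat.card_Icc]; omega
    have hδmono : ∀ j j', j ≤ j' → δ j ≤ δ j' := by
      intro j j' hjj
      apply Finset.card_le_card
      intro x hx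
      rw [Finset.mem_filter] at hx ⊢
      exact ⟨hx.1, by omega⟩
    have hδge : ∀ i j, 1 ≤ i → i ≤ r → f i < j → i ≤ δ j := by
      intro i j h1 h2 hfij
      have hsub : Finset.Icc 1 i ⊆ (Finset.Icc 1 r).filter (fun i' => f i' < j) := by
        intro x hx
        rw [Finset.mem_Icc] at hx
        rw [Finset.mem_filter, Finset.mem_Icc]
        have := hfmono x i hx.1 hx.2 h2
        exact ⟨⟨hx.1, by omega⟩, by omega⟩
      have := Finset.card_le_card hsub
      rw [Nat.card_Icc] at this
      simp only [hδdef]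
      omega
    have hδlt : ∀ i j, 1 ≤ i → i ≤ r → j ≤ f i → δ j ≤ i - 1 := by
      intro i j h1 h2 hfij
      have hsub : (Finset.Icc 1 r).filter (fun i' => f i' < j) ⊆ Finset.Icc 1 (i - 1) := by
        intro x hx
        rw [Finset.mem_filter, Finset.mem_Icc] at hx
        rw [Finset.mem_Icc]
        refine ⟨hx.1.1, ?_⟩
        by_contra hxi
        push_neg at hxi
        have := hfmono i x h1 (by omega) hx.1.2
        omega
      have := Finset.card_le_card hsub
      rw [Nat.card_Icc] at this
      simp only [hδdef]
      omega
    have hCmono : StrictMonoOn (fun i => i + f i) (Finset.Icc 1 r) := by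
      intro x hx y hy hxy
      simp only [Finset.coe_Icc, Set.mem_Icc] at hx hy
      have := hfmono x y hx.1 hxy.le hy.2
      simp only
      omega
    have hDmono : StrictMonoOn (fun j => j + δ j) (Finset.Icc 1 r) := by
      intro x hx y hy hxy
      have := hδmono x y hxy.le
      simp only
      omega
    set C := (Finset.Icc 1 r).image (fun i => i + f i) with hCdef
    set D := (Finset.Icc 1 r).image (fun j => j + δ j) with hDdef
    have hCcard : C.card = r := card_image_smo r _ hCmono
    have hDcard : D.card = r := card_image_smo r _ hDmono
    have hCmem : C ∈ binomF n r := by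
      rw [binomF, Finset.mem_powersetCard]
      refine ⟨?_, hCcard⟩
      intro x hx
      simp only [hCdef, Finset.mem_image, Finset.mem_Icc] at hx
      obtain ⟨a, ha, rfl⟩ := hx
      have : f a ≤ r := min_le_right _ _
      rw [Finset.mem_Icc]
      omega
    have hDmem : D ∈ binomF n r := by
      rw [binomF, Finset.mem_powersetCard]
      refine ⟨?_, hDcard⟩
      intro x hx
      simp only [hDdef, Finset.mem_image, Finset.mem_Icc] at hx
      obtain ⟨a, ha, rfl⟩ := hx
      have := hδr a
      rw [Finset.mem_Icc]
      omega
    have hCA : SetLE C A := by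
      refine ⟨by rw [hCcard, hAcard], ?_⟩
      intro i hi
      rw [hCcard, Finset.mem_Icc] at hi
      rw [hCdef, nthEl_image r _ hCmono hi.1 hi.2]
      have h1 := hAle i hi.1 hi.2
      have h2 : f i ≤ nthEl A i - i := min_le_left _ _
      show i + f i ≤ nthEl A i
      omega
    have hDB : SetLE D B := by
      refine ⟨by rw [hDcard, hBcard], ?_⟩
      intro j hj
      rw [hDcard, Finset.mem_Icc] at hj
      rw [hDdef, nthEl_image r _ hDmono hj.1 hj.2]
      -- show j + δ j ≤ nthEl B j
      by_contra hcon
      push_neg at hcon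
      have hBj := hBle j hj.1 hj.2
      have hm1 : 1 ≤ δ j := by omega
      have hmr : δ j ≤ r := hδr j
      have hfm : f (δ j) < j := by
        by_contra h'
        push_neg at h'
        have := hδlt (δ j) j hm1 hmr h'
        omega
      have ham : nthEl A (δ j) < δ j + j := by
        have h2 : f (δ j) = min (nthEl A (δ j) - δ j) r := rfl
        have h3 := hAle (δ j) hm1 hmr
        omega
      have := hne (δ j) j hm1 hmr hj.1 hj.2
      omega
    obtain ⟨x, hx⟩ := hCI C hCmem D hDmem hCA hDB
    rw [Finset.mem_inter] at hx
    obtain ⟨hxC, hxD⟩ := hx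
    simp only [hCdef, Finset.mem_image, Finset.mem_Icc] at hxC
    simp only [hDdef, Finset.mem_image, Finset.mem_Icc] at hxD
    obtain ⟨i, hi, hxi⟩ := hxC
    obtain ⟨j, hj, hxj⟩ := hxD
    rcases lt_or_ge (f i) j with h | h
    · have := hδge i j hi.1 hi.2 h
      omega
    · have := hδlt i j hi.1 hi.2 h
      omega
  · rintro ⟨i, j, hi1, hir, hj1, hjr, hmax⟩
    intro C hC D hD hCA hDB
    rw [binomF, Finset.mem_powersetCard] at hC hD
    obtain ⟨hCsub, hCcard⟩ := hC
    obtain ⟨hDsub, hDcard⟩ := hD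
    by_contra hemp
    rw [Finset.not_nonempty_iff_eq_empty] at hemp
    set I := Finset.Icc 1 (i + j - 1) with hIdef
    have hCI : i ≤ (C ∩ I).card := by
      have h := Finset.card_le_card_of_injOn (fun k => nthEl C k)
        (s := Finset.Icc 1 i) (t := C ∩ I) ?hmem ?hinj
      · rw [Nat.card_Icc] at h; omega
      case hmem =>
        intro k hk
        rw [Finset.mem_coe, Finset.mem_Icc] at hk
        show nthEl C k ∈ C ∩ I
        rw [Finset.mem_inter]
        have hkC : nthEl C k ∈ C := nthEl_mem C hk.1 (by omega)
        refine ⟨hkC, ?_⟩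
        have h1 : 1 ≤ nthEl C k := by
          have := hCsub hkC; rw [Finset.mem_Icc] at this; exact this.1
        have h2 : nthEl C k ≤ nthEl C i := nthEl_le C hk.1 hk.2 (by omega)
        have h3 : nthEl C i ≤ nthEl A i := by
          apply hCA.2
          rw [hCcard, Finset.mem_Icc]
          exact ⟨hi1, hir⟩
        rw [hIdef, Finset.mem_Icc]
        omega
      case hinj =>
        intro x hx y hy hxy
        simp only [Finset.coe_Icc, Set.mem_Icc] at hx hy
        have hxy' : nthEl C x = nthEl C y := hxy
        by_contra hne'
        rcases Nat.lt_or_ge x y with h | h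
        · have := nthEl_lt C hx.1 h (by omega); omega
        · have hlt : y < x := by omega
          have := nthEl_lt C hy.1 hlt (by omega); omega
    have hDI : j ≤ (D ∩ I).card := by
      have h := Finset.card_le_card_of_injOn (fun k => nthEl D k)
        (s := Finset.Icc 1 j) (t := D ∩ I) ?hmem ?hinj
      · rw [Nat.card_Icc] at h; omega
      case hmem =>
        intro k hk
        rw [Finset.mem_coe, Finset.mem_Icc] at hk
        show nthEl D k ∈ D ∩ I
        rw [Finset.mem_inter]
        have hkD : nthEl D k ∈ D := nthEl_mem D hk.1 (by omega)
        refine ⟨hkD, ?_⟩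
        have h1 : 1 ≤ nthEl D k := by
          have := hDsub hkD; rw [Finset.mem_Icc] at this; exact this.1
        have h2 : nthEl D k ≤ nthEl D j := nthEl_le D hk.1 hk.2 (by omega)
        have h3 : nthEl D j ≤ nthEl B j := by
          apply hDB.2
          rw [hDcard, Finset.mem_Icc]
          exact ⟨hj1, hjr⟩
        rw [hIdef, Finset.mem_Icc]
        omega
      case hinj =>
        intro x hx y hy hxy
        simp only [Finset.coe_Icc, Set.mem_Icc] at hx hy
        have hxy' : nthEl D x = nthEl D y := hxy
        by_contra hne'
        rcases Nat.lt_or_ge x y with h | h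
        · have := nthEl_lt D hx.1 h (by omega); omega
        · have hlt : y < x := by omega
          have := nthEl_lt D hy.1 hlt (by omega); omega
    have hdisj : Disjoint (C ∩ I) (D ∩ I) := by
      rw [Finset.disjoint_left]
      intro x hx1 hx2
      rw [Finset.mem_inter] at hx1 hx2
      have : x ∈ C ∩ D := Finset.mem_inter.mpr ⟨hx1.1, hx2.1⟩
      rw [hemp] at this
      exact absurd this (Finset.notMem_empty x)
    have hunion : (C ∩ I) ∪ (D ∩ I) ⊆ I := by
      intro x hx
      rcases Finset.mem_union.mp hx with h | h
      · exact (Finset.mem_inter.mp h).2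
      · exact (Finset.mem_inter.mp h).2
    have hcard := Finset.card_le_card hunion
    rw [Finset.card_union_of_disjoint hdisj] at hcard
    have hIcard : I.card = i + j - 1 := by rw [hIdef, Nat.card_Icc]; omega
    omega
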